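/- Let H be a supnormal subgroup of F. Then H is finitely generated if and only if H has finite index in F. -/

import Mathlib

/-!
Finite index implies finite generation by Schreier's lemma. Conversely, suppose `H` is generated
by finitely many elements of length at most `R`. Writing `w ∈ H` as a product of generators and
tracking the cancellation between consecutive factors shows that every prefix of the reduced word
of `w` lies in `H * b` for some `b` of length at most `R`. In rank at least two every reduced word
`t` is a prefix of the reduced word of `t c z c⁻¹ t⁻¹`, an element of the nontrivial normal
subgroup `N ≤ H`, so the finitely many `b` of length at most `R` meet every right coset of `H`.
In rank one the free group is infinite cyclic, where every nontrivial subgroup has finite index.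
-/

open FreeGroup

theorem IsCyclic.index_ne_zero_of_ne_bot {G : Type*} [Group G] [IsCyclic G] {H : Subgroup G}
    (hH : H ≠ ⊥) : H.index ≠ 0 := by
  obtain ⟨z, hzH, hz⟩ := H.bot_or_exists_ne_one.resolve_left hH
  obtain ⟨x, hx⟩ := IsCyclic.exists_generator (α := G)
  obtain ⟨k, rfl⟩ := Subgroup.mem_zpowers_iff.mp (hx z)
  have hk : k ≠ 0 := by rintro rfl; exact hz (zpow_zero x)
  have hgen : ∀ q : G ⧸ H, q ∈ Subgroup.zpowers (x : G ⧸ H) := by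
    rintro ⟨g⟩
    obtain ⟨m, rfl⟩ := Subgroup.mem_zpowers_iff.mp (hx g)
    exact ⟨m, (QuotientGroup.mk_zpow H x m).symm⟩
  have hfin : IsOfFinOrder (x : G ⧸ H) :=
    isOfFinOrder_iff_zpow_eq_one.mpr
      ⟨k, hk, by rw [← QuotientGroup.mk_zpow, QuotientGroup.eq_one_iff]; exact hzH⟩
  rw [Subgroup.index, ← orderOf_eq_card_of_forall_mem_zpowers hgen]
  exact hfin.orderOf_pos.ne'

theorem Subgroup.index_ne_zero_of_finite_cover {G : Type*} [Group G] (H : Subgroup G) {B : Set G}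
    (hB : B.Finite) (hcover : ∀ g, ∃ h ∈ H, ∃ b ∈ B, h * b = g) : H.index ≠ 0 := by
  have : Finite B := hB.to_subtype
  refine Subgroup.index_ne_zero_iff_finite.mpr (Finite.of_surjective
    (fun b : B => (QuotientGroup.mk (b : G)⁻¹ : G ⧸ H)) ?_)
  rintro ⟨g⟩
  obtain ⟨h, hh, b, hb, hg⟩ := hcover g⁻¹
  refine ⟨⟨b, hb⟩, QuotientGroup.eq.mpr ?_⟩
  rw [← inv_inv g, ← hg]
  simpa using H.inv_mem hh

namespace FreeGroup

variable {α : Type*} [DecidableEq α]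

theorem finite_setOf_norm_le [Finite α] (R : ℕ) : {g : FreeGroup α | norm g ≤ R}.Finite :=
  (List.finite_length_le _ R).preimage toWord_injective.injOn

theorem exists_reduce_append_of_isReduced :
    ∀ {L₁ L₂ : List (α × Bool)}, IsReduced L₁ → IsReduced L₂ →
      ∃ U D Y, L₁ = U ++ D ∧ L₂ = invRev D ++ Y ∧ reduce (L₁ ++ L₂) = U ++ Y
  | L₁, [], h₁, _ => ⟨L₁, [], [], by simp, by simp [invRev], by simpa using h₁.reduce_eq⟩
  | L₁, b :: L₂, h₁, h₂ => by
    rcases List.eq_nil_or_concat L₁ with rfl | ⟨L₁, a, rfl⟩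
    · exact ⟨[], [], b :: L₂, by simp, by simp [invRev], by simpa using h₂.reduce_eq⟩
    rw [List.concat_eq_append] at h₁ ⊢
    by_cases hab : a = (b.1, !b.2)
    · subst hab
      obtain ⟨U, D, Y, rfl, rfl, hUY⟩ :=
        exists_reduce_append_of_isReduced (h₁.infix (List.prefix_append _ _).isInfix) h₂.tail
      refine ⟨U, D ++ [(b.1, !b.2)], Y, by simp, by simp [invRev], ?_⟩
      rw [← hUY, List.append_assoc, List.singleton_append]
      simpa using
        reduce.Step.eq (Red.Step.not (L₁ := U ++ D) (L₂ := invRev D ++ Y) (b := !b.2))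
    · have hred : IsReduced (L₁ ++ [a] ++ b :: L₂) := by
        refine List.isChain_append.mpr ⟨h₁, h₂, ?_⟩
        simp only [List.getLast?_append, List.getLast?_singleton, Option.some_or,
          Option.mem_some_iff, List.head?_cons, forall_eq']
        exact fun h1 => by simpa [Bool.eq_not_iff] using (hab <| Prod.ext h1 ·)
      exact ⟨L₁ ++ [a], [], b :: L₂, by simp, by simp [invRev], hred.reduce_eq⟩

theorem prefix_toWord_mul_or {x y : FreeGroup α} {P : List (α × Bool)}
    (hP : P <+: (x * y).toWord) : P <+: x.toWord ∨ ∃ Q, Q <+: y.toWord ∧ mk P = x * mk Q := by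
  obtain ⟨U, D, Y, hx, hy, hxy⟩ :=
    exists_reduce_append_of_isReduced (isReduced_toWord (x := x)) (isReduced_toWord (x := y))
  rw [toWord_mul, hxy] at hP
  rcases List.prefix_or_prefix_of_prefix hP (List.prefix_append U Y) with hPU | ⟨Y₁, rfl⟩
  · exact .inl (hPU.trans (hx ▸ List.prefix_append U D))
  · refine .inr ⟨invRev D ++ Y₁, hy ▸ (List.prefix_append_right_inj _).mpr
      ((List.prefix_append_right_inj U).mp hP), ?_⟩
    rw [← mk_toWord (x := x), hx, ← mul_mk, ← mul_mk, ← mul_mk, ← inv_mk]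
    group

theorem exists_mul_norm_le_of_prefix_toWord_prod (H : Subgroup (FreeGroup α)) {R : ℕ} :
    ∀ {l : List (FreeGroup α)}, (∀ g ∈ l, g ∈ H ∧ norm g ≤ R) →
      ∀ {P}, P <+: l.prod.toWord → ∃ h ∈ H, ∃ b, norm b ≤ R ∧ h * b = mk P
  | [], _, P, hP => ⟨1, H.one_mem, 1, by simp, by simp_all [← one_eq_mk]⟩
  | g :: l, hl, P, hP => by
    rw [List.prod_cons] at hP
    obtain ⟨hgH, hgR⟩ := hl g List.mem_cons_self
    rcases prefix_toWord_mul_or hP with hPg | ⟨Q, hQ, hPQ⟩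
    · exact ⟨1, H.one_mem, mk P, (norm_mk_le.trans hPg.length_le).trans hgR, one_mul _⟩
    · obtain ⟨h, hh, b, hb, hQ⟩ :=
        exists_mul_norm_le_of_prefix_toWord_prod H (fun g' hg' => hl g' (.tail g hg')) hQ
      exact ⟨g * h, H.mul_mem hgH hh, b, hb, by rw [mul_assoc, hQ, hPQ]⟩

theorem _root_.Subgroup.FG.exists_mul_norm_le_of_prefix_toWord {H : Subgroup (FreeGroup α)}
    (hH : H.FG) :
    ∃ R, ∀ w ∈ H, ∀ P, P <+: w.toWord → ∃ h ∈ H, ∃ b, norm b ≤ R ∧ h * b = mk P := by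
  obtain ⟨S, hS, rfl⟩ := hH
  obtain ⟨R, hR⟩ := ((S.finite_toSet.union S.finite_toSet.inv).image norm).bddAbove
  refine ⟨R, fun w hw P hP => ?_⟩
  rw [← Subgroup.mem_toSubmonoid, Subgroup.closure_toSubmonoid] at hw
  obtain ⟨l, hl, rfl⟩ := Submonoid.exists_list_of_mem_closure hw
  refine exists_mul_norm_le_of_prefix_toWord_prod _ (fun g hg => ⟨?_, hR ⟨g, hl g hg, rfl⟩⟩) hP
  rw [← Subgroup.mem_toSubmonoid, Subgroup.closure_toSubmonoid]
  exact Submonoid.subset_closure (hl g hg)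

theorem exists_letter_ne [Nontrivial α] (a b d : α × Bool) : ∃ c, c ≠ a ∧ c ≠ b ∧ c ≠ d := by
  obtain ⟨x, y, hxy⟩ := exists_pair_ne α
  obtain ⟨c, -, hc⟩ := Finset.exists_mem_notMem_of_card_lt_card
    (s := {a, b, d}) (t := ({x, y} : Finset α) ×ˢ (Finset.univ : Finset Bool)) <| by
      rw [Finset.card_product, Finset.card_pair hxy, Finset.card_univ, Fintype.card_bool]
      exact Finset.card_le_three.trans_lt (by norm_num)
  simp only [Finset.mem_insert, Finset.mem_singleton, not_or] at hc
  exact ⟨c, hc⟩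

theorem _root_.Subgroup.Normal.exists_mem_prefix_toWord [Nontrivial α]
    {N : Subgroup (FreeGroup α)} (hN : N.Normal) (hN' : N ≠ ⊥) (t : FreeGroup α) :
    ∃ w ∈ N, t.toWord <+: w.toWord := by
  obtain ⟨z, hzN, hz⟩ := N.bot_or_exists_ne_one.resolve_left hN'
  rcases List.eq_nil_or_concat t.toWord with ht | ⟨T, ℓ, ht⟩
  · exact ⟨1, N.one_mem, by simp [ht]⟩
  have hℓ : t.toWord.getLast? = some ℓ := by simp [ht]
  have hℓ' : (invRev t.toWord).head? = some (ℓ.1, !ℓ.2) := by simp [ht, invRev]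
  have hz' : z.toWord ≠ [] := toWord_eq_nil_iff.not.mpr hz
  obtain ⟨f, hf⟩ : ∃ f, z.toWord.head? = some f := ⟨_, List.head?_eq_some_head hz'⟩
  obtain ⟨e, he⟩ : ∃ e, z.toWord.getLast? = some e := ⟨_, List.getLast?_eq_some_getLast hz'⟩
  -- `c` is chosen so that none of the four junctions in `t c z c⁻¹ t⁻¹` cancels.
  obtain ⟨c, hcℓ, hcf, hce⟩ := exists_letter_ne (ℓ.1, !ℓ.2) (f.1, !f.2) e
  set W := t.toWord ++ c :: (z.toWord ++ (c.1, !c.2) :: invRev t.toWord)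
  have hW : IsReduced W := by
    have hinv : IsReduced (invRev t.toWord) := toWord_inv t ▸ isReduced_toWord
    simp only [W, IsReduced, List.isChain_append, List.isChain_cons, List.head?_append,
      List.head?_cons, hℓ, hℓ', hf, he, Option.some_or, Option.mem_some_iff, forall_eq']
    simp only [ne_eq, Prod.ext_iff, not_and] at hcℓ hcf hce
    refine ⟨isReduced_toWord, ⟨?_, isReduced_toWord, ⟨?_, hinv⟩, ?_⟩, ?_⟩ <;> intro h
    · simpa [h] using hcf
    · simpa [h] using hcℓ
    · exact Bool.eq_not_iff.mpr (Ne.symm (hce h.symm))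
    · simpa [h, eq_comm] using hcℓ
  refine ⟨mk W, ?_, ?_⟩
  · have : mk W = t * (mk [c] * z * (mk [c])⁻¹) * t⁻¹ := by
      conv_rhs => rw [← mk_toWord (x := t), ← mk_toWord (x := z)]
      simp only [W, inv_mk, mul_mk, invRev]
      simp
    rw [this]
    exact hN.conj_mem _ (hN.conj_mem z hzN _) t
  · rw [toWord_mk, hW.reduce_eq]
    exact List.prefix_append _ _

theorem _root_.Subgroup.FG.index_ne_zero_of_normal_le [Finite α] [Nontrivial α]
    {H N : Subgroup (FreeGroup α)} (hH : H.FG) (hN : N.Normal) (hN' : N ≠ ⊥) (hNH : N ≤ H) :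
    H.index ≠ 0 := by
  obtain ⟨R, hR⟩ := hH.exists_mul_norm_le_of_prefix_toWord
  refine H.index_ne_zero_of_finite_cover (finite_setOf_norm_le R) fun g => ?_
  obtain ⟨w, hwN, hgw⟩ := hN.exists_mem_prefix_toWord hN' g
  obtain ⟨h, hh, b, hb, hg⟩ := hR w (hNH hwN) _ hgw
  exact ⟨h, hh, b, hb, by rw [hg, mk_toWord]⟩

end FreeGroup

/-- A supnormal subgroup of a finitely generated free group is finitely
generated if and only if it has finite index. -/
theorem supnormal_fg_iff_finiteIndex {n : ℕ} (hn : 1 ≤ n)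
    (H : Subgroup (FreeGroup (Fin n)))
    (hsup : ∃ N : Subgroup (FreeGroup (Fin n)), N.Normal ∧ N ≠ ⊥ ∧ N ≤ H) :
    H.FG ↔ H.index ≠ 0 := by
  obtain ⟨N, hN, hN', hNH⟩ := hsup
  refine ⟨fun hH => ?_, fun hH => ?_⟩
  · obtain rfl | hn2 : n = 1 ∨ 2 ≤ n := by omega
    · exact IsCyclic.index_ne_zero_of_ne_bot (ne_bot_of_le_ne_bot hN' hNH)
    · have : Nontrivial (Fin n) := Fin.nontrivial_iff_two_le.mpr hn2
      exact hH.index_ne_zero_of_normal_le hN hN' hNH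
  · have : H.FiniteIndex := ⟨hH⟩
    exact (Group.fg_iff_subgroup_fg H).mp inferInstance
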